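/- Consider system (N) with each L_ij(t) nonnegative, and assume hypotheses (H1), (H3), (H4) and (H5*). Assume further: (i) either L_ij(t)φ = a_ij(t)·φ(0) with a_ij(t) ≥ 0 for all i, j, t ≥ 0 (no delays in the linear part), or each a_ij(t) = ‖L_ij(t)‖ is bounded on [0,∞); (ii) liminf_{t→∞} β_i(t) > 0 and liminf_{x→∞} h_i⁻(x) > 0 for every i = 1,…,n, where β_i and h_i⁻ are as in (H4). Then system (N) is uniformly persistent: there exists m > 0 such that every admissible solution x of (N) on [−τ,∞) satisfies, for some T depending on the solution, x_i(t) ≥ m for all t ≥ T and all i = 1,…,n. -/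

import Mathlib

/-!
Rescale by the vector `v` of (H5*), `z_k = x_k / v_k`. Near `0` we have `h_k(s) ≥ θ s` for some
`θ ∈ (1/α, 1)`, so (H4) and (H5*) make a component that touches the common minimum `μ` (below a
uniform level `m`) while the recent history of all components stays above `lam` grow at rate at
least `γ lam - Γ (μ - lam)`. A comparison argument for delay differential inequalities then lets a
linear barrier, started at the solution-dependent minimum over the initial window, rise to the
uniform level `m` in finite time; afterwards the constant barrier `m / 2` is never crossed.
Positivity on the initial window follows from `x_k' ≥ -C x_k` on compact intervals.
-/

open Set Filter Topology

/-- The segment `x_t ∈ C([-τ,0];E)` of a continuous function `x : ℝ → E`. -/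
noncomputable def seg (τ : ℝ) {E : Type*} [TopologicalSpace E] (x : C(ℝ, E)) (t : ℝ) :
    C(Set.Icc (-τ) (0 : ℝ), E) :=
  x.comp ⟨fun θ => t + θ.1, continuous_const.add continuous_subtype_val⟩

/-- The `j`-th component of a continuous `ℝⁿ`-valued function, as a continuous map. -/
noncomputable def proj {n : ℕ} (x : C(ℝ, Fin n → ℝ)) (j : Fin n) : C(ℝ, ℝ) :=
  ⟨fun s => x s j, (continuous_apply j).comp x.continuous⟩

/-- `0 ∈ [-τ,0]` as an element of the subtype, for `τ ≥ 0`. -/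
def zeroPt (τ : ℝ) (hτ : 0 ≤ τ) : Set.Icc (-τ) (0 : ℝ) :=
  ⟨0, Set.mem_Icc.mpr ⟨neg_nonpos.mpr hτ, le_refl 0⟩⟩

/-- An admissible solution of system (N):
`x_i'(t) = -d_i(t) x_i(t) + ∑_j L_ij(t) (x_j)_t + f_i(t, (x_i)_t)`, with nonnegative
initial segment, positive components at `t = 0`, and componentwise nonnegative values
for all `t ≥ 0`. -/
def IsAdmissibleN (n : ℕ) (τ : ℝ) (d : Fin n → ℝ → ℝ)
    (L : Fin n → Fin n → ℝ → (C(Set.Icc (-τ) (0 : ℝ), ℝ) →L[ℝ] ℝ))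
    (f : Fin n → ℝ → C(Set.Icc (-τ) (0 : ℝ), ℝ) → ℝ)
    (x : C(ℝ, Fin n → ℝ)) : Prop :=
  (∀ i, ∀ t > (0 : ℝ), HasDerivAt (fun s => x s i)
      (-(d i t) * x t i + (∑ j, L i j t (seg τ (proj x j) t))
        + f i t (seg τ (proj x i) t)) t)
  ∧ (∀ s ∈ Set.Icc (-τ) (0 : ℝ), ∀ i, 0 ≤ x s i)
  ∧ (∀ i, 0 < x 0 i)
  ∧ (∀ t ≥ (0 : ℝ), ∀ i, 0 ≤ x t i)

theorem Finite.exists_pos_le_of_forall_pos {ι : Type*} [Finite ι] {a : ι → ℝ}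
    (ha : ∀ i, 0 < a i) : ∃ b > 0, ∀ i, b ≤ a i := by
  have h : ∀ᶠ b in 𝓝[>] (0 : ℝ), ∀ i, b ≤ a i :=
    eventually_all.2 fun i => nhdsWithin_le_nhds (eventually_le_nhds (ha i))
  obtain ⟨b, hb, hba⟩ := (h.and self_mem_nhdsWithin).exists
  exact ⟨b, hba, hb⟩

theorem Finite.exists_pos_ge {ι : Type*} [Finite ι] (a : ι → ℝ) :
    ∃ b > 0, ∀ i, a i ≤ b := by
  obtain ⟨b, hb⟩ := Finite.bddAbove_range a
  exact ⟨max b 1, by positivity, fun i => (hb ⟨i, rfl⟩).trans (le_max_left _ _)⟩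

theorem HasDerivWithinAt.exists_pos_forall_mul_le {h : ℝ → ℝ} {a θ : ℝ}
    (hh : HasDerivWithinAt h a (Ici 0) 0) (h0 : h 0 = 0) (hθ : θ < a) :
    ∃ δ > 0, ∀ s ∈ Icc 0 δ, θ * s ≤ h s := by
  have hslope : ∀ᶠ s in 𝓝[Ici 0 \ {0}] (0 : ℝ), θ < slope h 0 s :=
    (hasDerivWithinAt_iff_tendsto_slope.1 hh).eventually (eventually_gt_nhds hθ)
  obtain ⟨ε, hε, hεslope⟩ :=
    Metric.eventually_nhds_iff.1 (eventually_nhdsWithin_iff.1 hslope)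
  refine ⟨ε / 2, by positivity, fun s hs => ?_⟩
  rcases hs.1.eq_or_lt with rfl | hs0
  · simp [h0]
  · have hsε : dist s 0 < ε := by
      rw [Real.dist_eq, sub_zero, abs_of_pos hs0]
      linarith [hs.2]
    have := hεslope hsε ⟨hs.1, hs0.ne'⟩
    rw [slope_def_field, h0, sub_zero, sub_zero, lt_div_iff₀ hs0] at this
    exact this.le

section PositiveFunctional

variable {K : Type*} [TopologicalSpace K] [CompactSpace K] (L : C(K, ℝ) →L[ℝ] ℝ)

theorem ContinuousLinearMap.opNorm_eq_apply_one_of_nonneg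
    (hL : ∀ φ : C(K, ℝ), (∀ θ, 0 ≤ φ θ) → 0 ≤ L φ) : ‖L‖ = L 1 := by
  refine le_antisymm (L.opNorm_le_bound (hL 1 fun _ => zero_le_one) fun φ => ?_) ?_
  · have h₁ := hL (‖φ‖ • 1 + φ) fun θ => by
      simpa [neg_le_iff_add_nonneg'] using neg_le_of_abs_le (φ.norm_coe_le_norm θ)
    have h₂ := hL (‖φ‖ • 1 - φ) fun θ => by
      simpa using le_of_abs_le (φ.norm_coe_le_norm θ)
    simp only [map_add, map_sub, map_smul, smul_eq_mul] at h₁ h₂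
    rw [Real.norm_eq_abs, abs_le, mul_comm]
    constructor <;> linarith
  · calc L 1 ≤ ‖L 1‖ := le_abs_self _
      _ ≤ ‖L‖ * ‖(1 : C(K, ℝ))‖ := L.le_opNorm 1
      _ ≤ ‖L‖ * 1 := by
        gcongr; exact (ContinuousMap.norm_le _ zero_le_one).2 fun _ => by simp
      _ = ‖L‖ := mul_one _

theorem ContinuousLinearMap.mul_opNorm_le_apply_of_nonneg
    (hL : ∀ φ : C(K, ℝ), (∀ θ, 0 ≤ φ θ) → 0 ≤ L φ) {c : ℝ} {φ : C(K, ℝ)}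
    (hφ : ∀ θ, c ≤ φ θ) : c * ‖L‖ ≤ L φ := by
  have h := hL (φ - c • 1) fun θ => by simpa using hφ θ
  rw [map_sub, map_smul, smul_eq_mul, ← L.opNorm_eq_apply_one_of_nonneg hL] at h
  linarith

end PositiveFunctional

theorem HasDerivAt.nonpos_of_forall_Ico_le {g : ℝ → ℝ} {g' a b : ℝ} (hg : HasDerivAt g g' a)
    (hba : b < a) (hmin : ∀ s ∈ Ico b a, g a ≤ g s) : g' ≤ 0 := by
  have hslope : Tendsto (slope g a) (𝓝[<] a) (𝓝 g') :=
    hg.tendsto_slope.mono_left (nhdsWithin_mono _ fun _ hs => ne_of_lt hs)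
  refine le_of_tendsto hslope ?_
  filter_upwards [Ioo_mem_nhdsLT hba] with s hs
  rw [slope_def_field]
  exact div_nonpos_of_nonneg_of_nonpos (sub_nonneg.2 (hmin s ⟨hs.1.le, hs.2⟩))
    (by linarith [hs.2])

/-- Comparison principle for systems of delay differential inequalities. -/
theorem lt_of_barrier {ι : Type*} [Finite ι] {z F : ι → ℝ → ℝ} {ψ ψ' : ℝ → ℝ} {τ T₀ T₁ : ℝ}
    (hτ : 0 ≤ τ) (hz : ∀ k, Continuous (z k)) (hψ : Continuous ψ)
    (hzF : ∀ k, ∀ t ∈ Icc T₀ T₁, HasDerivAt (z k) (F k t) t)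
    (hψψ' : ∀ t ∈ Icc T₀ T₁, HasDerivAt ψ (ψ' t) t)
    (hinit : ∀ k, ∀ s ∈ Icc (T₀ - τ) T₀, ψ s < z k s)
    (hcontact : ∀ t ∈ Icc T₀ T₁, ∀ k, z k t = ψ t →
      (∀ j, ∀ s ∈ Icc (t - τ) t, ψ s ≤ z j s) → ψ' t < F k t) :
    ∀ t ∈ Icc (T₀ - τ) T₁, ∀ k, ψ t < z k t := by
  by_contra! hfail
  obtain ⟨t₁, ht₁, k₁, hk₁⟩ := hfail
  set S : Set ℝ := Icc T₀ T₁ ∩ ⋃ k, {t | z k t ≤ ψ t}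
  have hT₀t₁ : T₀ < t₁ := by
    by_contra! h
    exact (hinit k₁ t₁ ⟨ht₁.1, h⟩).not_ge hk₁
  have hS : IsClosed S :=
    isClosed_Icc.inter (isClosed_iUnion_of_finite fun k => isClosed_le (hz k) hψ)
  have hSne : S.Nonempty := ⟨t₁, ⟨hT₀t₁.le, ht₁.2⟩, mem_iUnion.2 ⟨k₁, hk₁⟩⟩
  have hSbdd : BddBelow S := ⟨T₀, fun _ ht => ht.1.1⟩
  obtain ⟨⟨hT₀t, htT₁⟩, hcross⟩ := hS.csInf_mem hSne hSbdd
  set t := sInf S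
  obtain ⟨k, hk⟩ := mem_iUnion.1 hcross
  have hbefore : ∀ j, ∀ s ∈ Ico (T₀ - τ) t, ψ s < z j s := by
    intro j s hs
    rcases le_or_gt s T₀ with hsT₀ | hT₀s
    · exact hinit j s ⟨hs.1, hsT₀⟩
    · by_contra! hsj
      have hsS : s ∈ S := ⟨⟨hT₀s.le, hs.2.le.trans htT₁⟩, mem_iUnion.2 ⟨j, hsj⟩⟩
      exact (csInf_le hSbdd hsS).not_gt hs.2
  have hT₀t : T₀ < t :=
    hT₀t.lt_of_ne fun h => (hinit k t ⟨by linarith, h.ge⟩).not_ge hk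
  have hat : ∀ j, ψ t ≤ z j t := fun j =>
    (isClosed_le hψ (hz j)).closure_subset_iff.2 (fun s hs => (hbefore j s hs).le)
      (by rw [closure_Ico (by linarith)]; exact ⟨by linarith, le_rfl⟩)
  have hkt : z k t = ψ t := le_antisymm hk (hat k)
  have hfast := hcontact t ⟨hT₀t.le, htT₁⟩ k hkt fun j s hs =>
    hs.2.eq_or_lt.elim (fun h => h ▸ hat j) fun h => (hbefore j s ⟨by linarith [hs.1], h⟩).le
  have hslow := ((hzF k t ⟨hT₀t.le, htT₁⟩).sub (hψψ' t ⟨hT₀t.le, htT₁⟩)).nonpos_of_forall_Ico_le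
    (show T₀ - τ < t by linarith) fun s hs =>
      show z k t - ψ t ≤ z k s - ψ s by linarith [hbefore k s hs]
  linarith

theorem exists_pos_lt_add_mul_of_contact_bound {ι : Type*} [Finite ι] {z F : ι → ℝ → ℝ}
    {Γ : ι → ℝ} {τ T γ η m lam₀ : ℝ} (hτ : 0 ≤ τ) (hγ : 0 < γ) (hη : 0 < η) (hlam₀ : 0 < lam₀)
    (hz : ∀ k, Continuous (z k)) (hzF : ∀ k, ∀ t ≥ T, HasDerivAt (z k) (F k t) t)
    (hinit : ∀ k, ∀ s ∈ Icc (T - τ) T, lam₀ < z k s)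
    (hbound : ∀ t ≥ T, ∀ k, ∀ lam μ, 0 < lam → lam ≤ μ → μ ≤ m → μ - lam ≤ η * lam →
      z k t = μ → (∀ j, μ ≤ z j t) → (∀ j, ∀ s ∈ Icc (t - τ) t, lam ≤ z j s) →
      γ * lam - Γ k * (μ - lam) ≤ F k t) :
    ∃ ρ > 0, ρ * τ ≤ lam₀ / 2 ∧
      ∀ t ∈ Icc (T - τ) (T + (m - lam₀) / ρ), ∀ k, lam₀ + ρ * (t - T) < z k t := by
  obtain ⟨G, hG, hΓG⟩ := Finite.exists_pos_ge Γ
  set ε := min (min lam₀ (η * lam₀)) (γ * lam₀) / 2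
  have hε : 0 < ε := by positivity
  have hε₁ : ε ≤ lam₀ / 2 ∧ ε ≤ η * lam₀ / 2 ∧ ε ≤ γ * lam₀ / 2 := by
    refine ⟨?_, ?_, ?_⟩ <;> simp only [ε] <;> gcongr <;> simp
  obtain ⟨ρ, hρ, hρε⟩ := exists_pos_mul_lt hε (1 + τ + G * τ)
  have hρτ : ρ * τ ≤ ε := by nlinarith [mul_nonneg hG.le hτ]
  refine ⟨ρ, hρ, by linarith, ?_⟩
  refine lt_of_barrier (ψ' := fun _ => ρ) hτ hz (by fun_prop) (fun k t ht => hzF k t ht.1)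
    (fun t _ => by simpa using (((hasDerivAt_id t).sub_const T).const_mul ρ).const_add lam₀)
    (fun k s hs => by nlinarith [hinit k s hs, hs.2]) fun t ht k hkt hwin => ?_
  have hμm : lam₀ + ρ * (t - T) ≤ m := by
    have := (le_div_iff₀' hρ).1 (show t - T ≤ (m - lam₀) / ρ by linarith [ht.2])
    linarith
  have hwin' : ∀ j, ∀ s ∈ Icc (t - τ) t, lam₀ + ρ * (t - T) - ρ * τ ≤ z j s :=
    fun j s hs => by nlinarith [hwin j s hs, hs.1]
  have hρt : 0 ≤ ρ * (t - T) := mul_nonneg hρ.le (by linarith [ht.1])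
  have h := hbound t ht.1 k _ _ (by nlinarith) (by nlinarith [mul_nonneg hρ.le hτ]) hμm
    (by nlinarith) hkt (fun j => hwin j t ⟨by linarith, le_rfl⟩) hwin'
  have : Γ k * (ρ * τ) ≤ G * (ρ * τ) := mul_le_mul_of_nonneg_right (hΓG k) (by positivity)
  nlinarith

theorem exists_forall_half_lt_of_contact_bound {ι : Type*} [Finite ι] {z F : ι → ℝ → ℝ}
    {Γ : ι → ℝ} {τ T γ η m : ℝ} (hτ : 0 ≤ τ) (hγ : 0 < γ) (hη : 0 < η) (hm : 0 < m)
    (hz : ∀ k, Continuous (z k)) (hzF : ∀ k, ∀ t ≥ T, HasDerivAt (z k) (F k t) t)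
    (hpos : ∀ k, ∀ s ∈ Icc (T - τ) T, 0 < z k s)
    (hbound : ∀ t ≥ T, ∀ k, ∀ lam μ, 0 < lam → lam ≤ μ → μ ≤ m → μ - lam ≤ η * lam →
      z k t = μ → (∀ j, μ ≤ z j t) → (∀ j, ∀ s ∈ Icc (t - τ) t, lam ≤ z j s) →
      γ * lam - Γ k * (μ - lam) ≤ F k t) :
    ∃ T', ∀ t ≥ T', ∀ k, m / 2 < z k t := by
  choose a ha haz using fun k => isCompact_Icc.exists_forall_le' (hz k).continuousOn (hpos k)
  obtain ⟨b, hb, hba⟩ := Finite.exists_pos_le_of_forall_pos ha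
  set lam₀ := min b m / 2
  have hlam₀ : 0 < lam₀ := by positivity
  have hlam₀m : lam₀ ≤ m / 2 := by simp only [lam₀]; linarith [min_le_right b m]
  have hlam₀z : ∀ k, ∀ s ∈ Icc (T - τ) T, lam₀ < z k s := fun k s hs => by
    have := min_le_left b m; simp only [lam₀]; linarith [hba k, haz k s hs]
  obtain ⟨ρ, hρ, hρτ, hrise⟩ :=
    exists_pos_lt_add_mul_of_contact_bound hτ hγ hη hlam₀ hz hzF hlam₀z hbound
  set T₁ := T + (m - lam₀) / ρ
  have hTT₁ : T ≤ T₁ := le_add_of_nonneg_right (div_nonneg (by linarith) hρ.le)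
  have hρT₁ : ρ * (T₁ - T) = m - lam₀ := by simp only [T₁]; field_simp; ring
  refine ⟨T₁, fun t ht k => ?_⟩
  refine lt_of_barrier (ψ := fun _ => m / 2) (ψ' := fun _ => 0) (T₀ := T₁) (T₁ := t) hτ hz
    continuous_const (fun k s hs => hzF k s (hTT₁.trans hs.1)) (fun _ _ => hasDerivAt_const _ _)
    (fun k s hs => ?_) (fun s hs j hjs hwin => ?_) t ⟨by linarith, le_rfl⟩ k
  · have := hrise s ⟨by linarith [hs.1], hs.2⟩ k
    nlinarith [hs.1]
  · have h := hbound s (hTT₁.trans hs.1) j (m / 2) (m / 2) (by positivity) le_rfl (by linarith)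
      (by simp; positivity) hjs (fun i => hwin i s ⟨by linarith, le_rfl⟩) hwin
    nlinarith

theorem pos_of_hasDerivAt_ge_neg_mul {y y' : ℝ → ℝ} {C a b : ℝ} (hy : ContinuousOn y (Icc a b))
    (hyy' : ∀ t ∈ Ioo a b, HasDerivAt y (y' t) t) (hC : ∀ t ∈ Ioo a b, -(C * y t) ≤ y' t)
    (ha : 0 < y a) : ∀ t ∈ Icc a b, 0 < y t := by
  have hmono : MonotoneOn (fun t => y t * Real.exp (C * t)) (Icc a b) := by
    refine monotoneOn_of_hasDerivWithinAt_nonneg (convex_Icc a b)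
      (hy.mul (by fun_prop)) (fun t ht => ?_) (fun t ht => ?_)
      (f' := fun t => (y' t + C * y t) * Real.exp (C * t))
    · rw [interior_Icc] at ht
      have hexp : HasDerivAt (fun s => Real.exp (C * s)) (Real.exp (C * t) * C) t := by
        simpa using ((hasDerivAt_id t).const_mul C).exp
      exact (((hyy' t ht).mul hexp).congr_deriv (by ring)).hasDerivWithinAt
    · rw [interior_Icc] at ht
      exact mul_nonneg (by linarith [hC t ht]) (Real.exp_pos _).le
  intro t ht
  have := hmono (left_mem_Icc.2 (ht.1.trans ht.2)) ht ht.1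
  exact pos_of_mul_pos_left (lt_of_lt_of_le (by positivity) this) (Real.exp_pos _).le

noncomputable def rhsN {n : ℕ} (τ : ℝ) (d : Fin n → ℝ → ℝ)
    (L : Fin n → Fin n → ℝ → (C(Set.Icc (-τ) (0 : ℝ), ℝ) →L[ℝ] ℝ))
    (f : Fin n → ℝ → C(Set.Icc (-τ) (0 : ℝ), ℝ) → ℝ) (x : C(ℝ, Fin n → ℝ)) (k : Fin n)
    (t : ℝ) : ℝ :=
  -(d k t) * x t k + (∑ j, L k j t (seg τ (proj x j) t)) + f k t (seg τ (proj x k) t)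

section Segments

variable {τ : ℝ} {E : Type*} [TopologicalSpace E]

@[simp]
theorem seg_zeroPt (hτ : 0 ≤ τ) (x : C(ℝ, E)) (t : ℝ) : seg τ x t (zeroPt τ hτ) = x t :=
  congrArg x (add_zero t)

@[simp]
theorem proj_apply {n : ℕ} (x : C(ℝ, Fin n → ℝ)) (j : Fin n) (s : ℝ) : proj x j s = x s j := rfl

theorem le_seg_of_forall_le {y : C(ℝ, ℝ)} {t c : ℝ} (hy : ∀ s ∈ Icc (t - τ) t, c ≤ y s)
    (θ : Icc (-τ) (0 : ℝ)) : c ≤ seg τ y t θ :=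
  hy (t + θ) ⟨by linarith [θ.2.1], by linarith [θ.2.2]⟩

end Segments

section Admissible

variable {n : ℕ} {τ : ℝ} {d : Fin n → ℝ → ℝ}
  {L : Fin n → Fin n → ℝ → (C(Set.Icc (-τ) (0 : ℝ), ℝ) →L[ℝ] ℝ)}
  {f : Fin n → ℝ → C(Set.Icc (-τ) (0 : ℝ), ℝ) → ℝ} {x : C(ℝ, Fin n → ℝ)}

theorem IsAdmissibleN.hasDerivAt (hx : IsAdmissibleN n τ d L f x) (k : Fin n) {t : ℝ}
    (ht : 0 < t) : HasDerivAt (fun s => x s k) (rhsN τ d L f x k t) t :=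
  hx.1 k t ht

theorem IsAdmissibleN.seg_nonneg (hx : IsAdmissibleN n τ d L f x) (j : Fin n) {t : ℝ}
    (ht : 0 ≤ t) (θ : Icc (-τ) (0 : ℝ)) : 0 ≤ seg τ (proj x j) t θ := by
  rcases le_or_gt 0 (t + θ) with h | h
  · exact hx.2.2.2 _ h j
  · exact hx.2.1 _ ⟨by linarith [θ.2.1], h.le⟩ j

theorem IsAdmissibleN.pos_of_mem_Icc (hx : IsAdmissibleN n τ d L f x)
    (hd : ∀ i, ContinuousOn (d i) (Ici 0))
    (hL : ∀ i j, ∀ t ≥ (0 : ℝ), ∀ φ : C(Icc (-τ) (0 : ℝ), ℝ), (∀ θ, 0 ≤ φ θ) → 0 ≤ L i j t φ)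
    (hf : ∀ i, ∀ t ≥ (0 : ℝ), ∀ φ : C(Icc (-τ) (0 : ℝ), ℝ), (∀ θ, 0 ≤ φ θ) → 0 ≤ f i t φ)
    (k : Fin n) {T : ℝ} : ∀ t ∈ Icc 0 T, 0 < x t k := by
  obtain ⟨C, hC⟩ := (isCompact_Icc (a := 0) (b := T)).exists_bound_of_continuousOn
    ((hd k).mono Icc_subset_Ici_self)
  refine pos_of_hasDerivAt_ge_neg_mul (C := C) (by fun_prop) (fun t ht => hx.hasDerivAt k ht.1)
    (fun t ht => ?_) (hx.2.2.1 k)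
  have hdC : d k t ≤ C := (le_abs_self _).trans (hC t (Ioo_subset_Icc_self ht))
  have hsum := Finset.sum_nonneg fun j (_ : j ∈ Finset.univ) =>
    hL k j t ht.1.le _ (hx.seg_nonneg j ht.1.le)
  have hfk := hf k t ht.1.le _ (hx.seg_nonneg k ht.1.le)
  have := mul_le_mul_of_nonneg_right hdC (hx.2.2.2 t ht.1.le k)
  simp only [rhsN]
  linarith

end Admissible

theorem mul_mul_le_of_forall_le {K : Type*} [TopologicalSpace K] {g : C(K, ℝ) → ℝ}
    {h : ℝ → ℝ} {b θ δ a : ℝ} (hg : ∀ φ : C(K, ℝ), (∀ x, 0 ≤ φ x) → b * h (⨅ x, φ x) ≤ g φ)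
    (hb : 0 ≤ b) (hθ : 0 ≤ θ) (hh : ∀ s ∈ Icc 0 δ, θ * s ≤ h s) (ha : 0 ≤ a) {φ : C(K, ℝ)}
    (hφ : ∀ x, a ≤ φ x) {x₀ : K} (hx₀ : φ x₀ ≤ δ) : b * (θ * a) ≤ g φ := by
  have : Nonempty K := ⟨x₀⟩
  have h₁ : a ≤ ⨅ x, φ x := le_ciInf hφ
  have h₂ : ⨅ x, φ x ≤ δ := (ciInf_le ⟨a, forall_mem_range.2 hφ⟩ x₀).trans hx₀
  calc b * (θ * a) ≤ b * h (⨅ x, φ x) := by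
        gcongr
        exact (mul_le_mul_of_nonneg_left h₁ hθ).trans (hh _ ⟨ha.trans h₁, h₂⟩)
    _ ≤ g φ := hg φ fun x => ha.trans (hφ x)

section Estimates

variable {n : ℕ} {τ : ℝ} {d : Fin n → ℝ → ℝ}
  {L : Fin n → Fin n → ℝ → (C(Set.Icc (-τ) (0 : ℝ), ℝ) →L[ℝ] ℝ)}
  {f : Fin n → ℝ → C(Set.Icc (-τ) (0 : ℝ), ℝ) → ℝ}

theorem exists_sum_apply_seg_ge (hτ : 0 ≤ τ)
    (hL : ∀ i j, ∀ t ≥ (0 : ℝ), ∀ φ : C(Icc (-τ) (0 : ℝ), ℝ), (∀ θ, 0 ≤ φ θ) → 0 ≤ L i j t φ)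
    (hi : (∀ i j, ∀ t ≥ (0 : ℝ), ∀ φ : C(Icc (-τ) (0 : ℝ), ℝ),
        L i j t φ = ‖L i j t‖ * φ (zeroPt τ hτ))
      ∨ (∀ i j, ∃ K, ∀ t ≥ (0 : ℝ), ‖L i j t‖ ≤ K))
    {v : Fin n → ℝ} (hv : ∀ j, 0 ≤ v j) :
    ∃ Γ : Fin n → ℝ, ∀ (x : C(ℝ, Fin n → ℝ)) (t : ℝ), 0 ≤ t → ∀ k (lam μ : ℝ), lam ≤ μ →
      (∀ j, v j * μ ≤ x t j) → (∀ j, ∀ s ∈ Icc (t - τ) t, v j * lam ≤ x s j) →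
      μ * ∑ j, ‖L k j t‖ * v j - Γ k * (μ - lam) ≤ ∑ j, L k j t (seg τ (proj x j) t) := by
  rcases hi with hdelayfree | hbounded
  · refine ⟨0, fun x t ht k lam μ _ hμ _ => ?_⟩
    rw [Pi.zero_apply, zero_mul, sub_zero, Finset.mul_sum]
    refine Finset.sum_le_sum fun j _ => ?_
    rw [hdelayfree k j t ht, seg_zeroPt, proj_apply]
    nlinarith [hμ j, norm_nonneg (L k j t)]
  · choose K hK using hbounded
    refine ⟨fun k => ∑ j, K k j * v j, fun x t ht k lam μ hlamμ _ hwin => ?_⟩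
    have hlow : lam * ∑ j, ‖L k j t‖ * v j ≤ ∑ j, L k j t (seg τ (proj x j) t) := by
      rw [Finset.mul_sum]
      refine Finset.sum_le_sum fun j _ => ?_
      have := (L k j t).mul_opNorm_le_apply_of_nonneg (hL k j t ht)
        (le_seg_of_forall_le (y := proj x j) (hwin j))
      linarith
    have hK' : ∑ j, ‖L k j t‖ * v j ≤ ∑ j, K k j * v j :=
      Finset.sum_le_sum fun j _ => mul_le_mul_of_nonneg_right (hK k j t ht) (hv j)
    nlinarith

theorem le_rhsN_div_of_contact (hτ : 0 ≤ τ) {β : Fin n → ℝ → ℝ} {h : ℝ → ℝ} {v : Fin n → ℝ}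
    {x : C(ℝ, Fin n → ℝ)} {Γ : Fin n → ℝ} {α θ δ c t lam μ : ℝ} {k : Fin n}
    (hv : ∀ i, 0 < v i) (hα : 0 < α) (hαθ : α⁻¹ < θ) (hc : 0 ≤ c)
    (hH5 : α * (d k t * v k - ∑ j, ‖L k j t‖ * v j) ≤ β k t * v k)
    (hH4 : ∀ φ : C(Icc (-τ) (0 : ℝ), ℝ), (∀ θ, 0 ≤ φ θ) → β k t * h (⨅ θ, φ θ) ≤ f k t φ)
    (hβ : c ≤ β k t) (hh : ∀ s ∈ Icc 0 δ, θ * s ≤ h s)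
    (hlin : ∀ lam μ : ℝ, lam ≤ μ → (∀ j, v j * μ ≤ x t j) →
      (∀ j, ∀ s ∈ Icc (t - τ) t, v j * lam ≤ x s j) →
      μ * ∑ j, ‖L k j t‖ * v j - Γ k * (μ - lam) ≤ ∑ j, L k j t (seg τ (proj x j) t))
    (hlam : 0 < lam) (hlamμ : lam ≤ μ) (hμδ : v k * μ ≤ δ)
    (hμlam : μ - lam ≤ α * (θ - α⁻¹) / 2 * lam)
    (hxk : x t k / v k = μ) (hxj : ∀ j, μ ≤ x t j / v j)
    (hwin : ∀ j, ∀ s ∈ Icc (t - τ) t, lam ≤ x s j / v j) :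
    c * (θ - α⁻¹) / 2 * lam - Γ k / v k * (μ - lam) ≤ rhsN τ d L f x k t / v k := by
  have hxk' : x t k = v k * μ := ((div_eq_iff (hv k).ne').1 hxk).trans (mul_comm _ _)
  have hxj' : ∀ j, v j * μ ≤ x t j := fun j => by
    have := hxj j; rwa [le_div_iff₀ (hv j), mul_comm] at this
  have hwin' : ∀ j, ∀ s ∈ Icc (t - τ) t, v j * lam ≤ x s j := fun j s hs => by
    have := hwin j s hs; rwa [le_div_iff₀ (hv j), mul_comm] at this
  have hθ : 0 ≤ θ := (inv_pos.2 hα).le.trans hαθ.le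
  have hf : β k t * (θ * (v k * lam)) ≤ f k t (seg τ (proj x k) t) :=
    mul_mul_le_of_forall_le hH4 (hc.trans hβ) hθ hh (mul_pos (hv k) hlam).le
      (le_seg_of_forall_le (y := proj x k) (hwin' k)) (x₀ := zeroPt τ hτ)
      (by rw [seg_zeroPt, proj_apply, hxk']; exact hμδ)
  have hL := hlin lam μ hlamμ hxj' hwin'
  -- (H5*) absorbs the instantaneous loss `-d_k x_k` against the linear terms
  have hH5μ : μ * (d k t * v k - ∑ j, ‖L k j t‖ * v j) ≤ μ * (β k t * v k) / α := by
    rw [le_div_iff₀ hα]; nlinarith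
  have hgain : c * ((θ - α⁻¹) / 2 * lam) ≤ β k t * (θ * lam - μ / α) := by
    have hgap : (θ - α⁻¹) / 2 * lam ≤ θ * lam - μ / α := by
      rw [mul_sub, mul_inv_cancel₀ hα.ne'] at hμlam
      rw [div_eq_mul_inv μ]; field_simp; nlinarith
    exact mul_le_mul hβ hgap (by nlinarith) (hc.trans hβ)
  have hgain' := mul_le_mul_of_nonneg_left hgain (hv k).le
  have hsplit : v k * (β k t * (θ * lam - μ / α)) =
      β k t * (θ * (v k * lam)) - μ * (β k t * v k) / α := by ring
  have hΓ : Γ k / v k * (μ - lam) * v k = Γ k * (μ - lam) := by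
    have := (hv k).ne'; field_simp
  rw [le_div_iff₀ (hv k), rhsN, hxk']
  linarith

end Estimates

theorem uniform_persistence_N_general
    (n : ℕ) (τ : ℝ) (hτ : 0 ≤ τ)
    (d : Fin n → ℝ → ℝ)
    (L : Fin n → Fin n → ℝ → (C(Set.Icc (-τ) (0 : ℝ), ℝ) →L[ℝ] ℝ))
    (f : Fin n → ℝ → C(Set.Icc (-τ) (0 : ℝ), ℝ) → ℝ)
    -- (H1): continuity of the data
    (hd_cont : ∀ i, ContinuousOn (d i) (Set.Ici 0))
    -- each L_ij(t) is a nonnegative functional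
    (hL_nonneg : ∀ i j, ∀ t ≥ (0 : ℝ), ∀ φ : C(Set.Icc (-τ) (0 : ℝ), ℝ),
      (∀ θ, 0 ≤ φ θ) → 0 ≤ L i j t φ)
    -- f_i maps into [0,∞)
    (hf_nonneg : ∀ i, ∀ t ≥ (0 : ℝ), ∀ φ : C(Set.Icc (-τ) (0 : ℝ), ℝ),
      (∀ θ, 0 ≤ φ θ) → 0 ≤ f i t φ)
    -- (H4): data β_i > 0 continuous, h_i⁻ continuous, h_i⁻(0)=0, h_i⁻ > 0 on (0,∞),
    -- (h_i⁻)'(0⁺) = 1, and f_i(t,φ) ≥ β_i(t) h_i⁻(min φ) for t large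
    (β : Fin n → ℝ → ℝ)
    (h : Fin n → ℝ → ℝ)
    (hh0 : ∀ i, h i 0 = 0)
    (hh_deriv : ∀ i, HasDerivWithinAt (h i) 1 (Set.Ici 0) 0)
    (hH4 : ∃ T ≥ (0 : ℝ), ∀ i, ∀ t ≥ T, ∀ φ : C(Set.Icc (-τ) (0 : ℝ), ℝ),
      (∀ θ, 0 ≤ φ θ) → β i t * h i (⨅ θ : Set.Icc (-τ) (0 : ℝ), φ θ) ≤ f i t φ)
    -- (i): either no delays in the linear part, or all a_ij bounded on [0,∞)
    (hi : (∀ i j, ∀ t ≥ (0 : ℝ), ∀ φ : C(Set.Icc (-τ) (0 : ℝ), ℝ),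
        L i j t φ = ‖L i j t‖ * φ (zeroPt τ hτ))
      ∨ (∀ i j, ∃ K, ∀ t ≥ (0 : ℝ), ‖L i j t‖ ≤ K))
    -- (H5*)
    (hH5star : ∃ v : Fin n → ℝ, (∀ i, 0 < v i) ∧ ∃ α > (1 : ℝ), ∃ T ≥ (0 : ℝ),
      ∀ t ≥ T, ∀ i, α * (d i t * v i - ∑ j, ‖L i j t‖ * v j) ≤ β i t * v i)
    -- (ii): liminf_{t→∞} β_i(t) > 0 and liminf_{x→∞} h_i⁻(x) > 0 for every i
    (hβ_liminf : ∀ i, ∃ c > (0 : ℝ), ∀ᶠ t in Filter.atTop, c ≤ β i t) :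
    -- conclusion: uniform persistence
    ∃ m > (0 : ℝ), ∀ x : C(ℝ, Fin n → ℝ),
      IsAdmissibleN n τ d L f x →
      ∃ T', ∀ t ≥ T', ∀ i, m ≤ x t i := by
  obtain ⟨v, hv, α, hα, T₅, -, hH5⟩ := hH5star
  obtain ⟨T₄, -, hH4⟩ := hH4
  choose c hc hβc using hβ_liminf
  obtain ⟨c₀, hc₀, hc₀c⟩ := Finite.exists_pos_le_of_forall_pos hc
  obtain ⟨T, hT⟩ := eventually_atTop.1 ((eventually_gt_atTop τ).and ((eventually_ge_atTop T₄).and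
    ((eventually_ge_atTop T₅).and (eventually_all.2 hβc))))
  obtain ⟨θ, hαθ, hθ⟩ := exists_between (inv_lt_one_of_one_lt₀ hα)
  choose δ hδ hhθ using fun i => (hh_deriv i).exists_pos_forall_mul_le (hh0 i) hθ
  obtain ⟨δ₀, hδ₀, hδ₀δ⟩ := Finite.exists_pos_le_of_forall_pos hδ
  obtain ⟨V, hV, hvV⟩ := Finite.exists_pos_ge v
  obtain ⟨w, hw, hwv⟩ := Finite.exists_pos_le_of_forall_pos hv
  obtain ⟨Γ, hΓ⟩ := exists_sum_apply_seg_ge hτ hL_nonneg hi fun j => (hv j).le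
  have hα₀ : 0 < α := by linarith
  have hθα : 0 < θ - α⁻¹ := sub_pos.2 hαθ
  refine ⟨w * (δ₀ / V / 2), by positivity, fun x hx => ?_⟩
  obtain ⟨T', hT'⟩ := exists_forall_half_lt_of_contact_bound (z := fun k t => x t k / v k)
    (F := fun k t => rhsN τ d L f x k t / v k) (Γ := fun k => Γ k / v k) (T := T)
    (γ := c₀ * (θ - α⁻¹) / 2) (η := α * (θ - α⁻¹) / 2) (m := δ₀ / V) hτ
    (by positivity) (by positivity) (by positivity) (fun k => by fun_prop)
    (fun k t ht => (hx.hasDerivAt k (by linarith [(hT t ht).1])).div_const (v k))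
    (fun k s hs => div_pos (hx.pos_of_mem_Icc hd_cont hL_nonneg hf_nonneg k s
      ⟨by linarith [hs.1, (hT T le_rfl).1], hs.2⟩) (hv k))
    fun t ht k lam μ hlam hlamμ hμm hμlam hxk hxj hwin => by
      obtain ⟨hτt, hT₄t, hT₅t, hβt⟩ := hT t ht
      exact le_rhsN_div_of_contact hτ hv hα₀ hαθ hc₀.le (hH5 t hT₅t k) (hH4 k t hT₄t)
        ((hc₀c k).trans (hβt k)) (fun s hs => hhθ k s ⟨hs.1, hs.2.trans (hδ₀δ k)⟩)
        (hΓ x t (by linarith) k) hlam hlamμ (by rw [le_div_iff₀ hV] at hμm; nlinarith [hvV k])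
        hμlam hxk hxj hwin
  refine ⟨T', fun t ht i => ?_⟩
  calc w * (δ₀ / V / 2) ≤ v i * (x t i / v i) :=
        mul_le_mul (hwv i) (by linarith [hT' t ht i]) (by positivity) (hv i).le
    _ = x t i := mul_div_cancel₀ _ (hv i).ne'

/-- Uniform persistence of system (N) under (H1), (H3), (H4), (H5*) and assumptions
(i)-(ii) (Theorem 2.7 of the paper). -/
theorem uniform_persistence_N
    (n : ℕ) (hn : 1 ≤ n) (τ : ℝ) (hτ : 0 ≤ τ)
    (d : Fin n → ℝ → ℝ)
    (L : Fin n → Fin n → ℝ → (C(Set.Icc (-τ) (0 : ℝ), ℝ) →L[ℝ] ℝ))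
    (f : Fin n → ℝ → C(Set.Icc (-τ) (0 : ℝ), ℝ) → ℝ)
    -- (H1): continuity of the data
    (hd_pos : ∀ i, ∀ t ≥ (0 : ℝ), 0 < d i t)
    (hd_cont : ∀ i, ContinuousOn (d i) (Set.Ici 0))
    (hL_cont : ∀ i j, ContinuousOn (L i j) (Set.Ici (0 : ℝ)))
    -- each L_ij(t) is a nonnegative functional
    (hL_nonneg : ∀ i j, ∀ t ≥ (0 : ℝ), ∀ φ : C(Set.Icc (-τ) (0 : ℝ), ℝ),
      (∀ θ, 0 ≤ φ θ) → 0 ≤ L i j t φ)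
    -- f_i maps into [0,∞)
    (hf_nonneg : ∀ i, ∀ t ≥ (0 : ℝ), ∀ φ : C(Set.Icc (-τ) (0 : ℝ), ℝ),
      (∀ θ, 0 ≤ φ θ) → 0 ≤ f i t φ)
    -- (H3): f_i continuous, completely continuous, locally Lipschitz in the 2nd variable
    (hf_cont : ∀ i, ContinuousOn (fun p : ℝ × C(Set.Icc (-τ) (0 : ℝ), ℝ) => f i p.1 p.2)
      (Set.Ici (0 : ℝ) ×ˢ {φ | ∀ θ, 0 ≤ φ θ}))
    (hf_bdd : ∀ i, ∀ r : ℝ, ∃ K, ∀ t ≥ (0 : ℝ), ∀ φ : C(Set.Icc (-τ) (0 : ℝ), ℝ),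
      (∀ θ, 0 ≤ φ θ) → ‖φ‖ ≤ r → f i t φ ≤ K)
    (hf_lip : ∀ i, ∀ t ≥ (0 : ℝ), ∀ φ : C(Set.Icc (-τ) (0 : ℝ), ℝ), (∀ θ, 0 ≤ φ θ) →
      ∃ ε > (0 : ℝ), ∃ Λ ≥ (0 : ℝ), ∀ ψ χ : C(Set.Icc (-τ) (0 : ℝ), ℝ),
        (∀ θ, 0 ≤ ψ θ) → (∀ θ, 0 ≤ χ θ) → ‖ψ - φ‖ < ε → ‖χ - φ‖ < ε →
        |f i t ψ - f i t χ| ≤ Λ * ‖ψ - χ‖)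
    -- (H4): data β_i > 0 continuous, h_i⁻ continuous, h_i⁻(0)=0, h_i⁻ > 0 on (0,∞),
    -- (h_i⁻)'(0⁺) = 1, and f_i(t,φ) ≥ β_i(t) h_i⁻(min φ) for t large
    (β : Fin n → ℝ → ℝ) (hβ_cont : ∀ i, ContinuousOn (β i) (Set.Ici 0))
    (hβ_pos : ∀ i, ∀ t ≥ (0 : ℝ), 0 < β i t)
    (h : Fin n → ℝ → ℝ) (hh_cont : ∀ i, ContinuousOn (h i) (Set.Ici 0))
    (hh0 : ∀ i, h i 0 = 0) (hh_pos : ∀ i, ∀ x > (0 : ℝ), 0 < h i x)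
    (hh_deriv : ∀ i, HasDerivWithinAt (h i) 1 (Set.Ici 0) 0)
    (hH4 : ∃ T ≥ (0 : ℝ), ∀ i, ∀ t ≥ T, ∀ φ : C(Set.Icc (-τ) (0 : ℝ), ℝ),
      (∀ θ, 0 ≤ φ θ) → β i t * h i (⨅ θ : Set.Icc (-τ) (0 : ℝ), φ θ) ≤ f i t φ)
    -- (i): either no delays in the linear part, or all a_ij bounded on [0,∞)
    (hi : (∀ i j, ∀ t ≥ (0 : ℝ), ∀ φ : C(Set.Icc (-τ) (0 : ℝ), ℝ),
        L i j t φ = ‖L i j t‖ * φ (zeroPt τ hτ))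
      ∨ (∀ i j, ∃ K, ∀ t ≥ (0 : ℝ), ‖L i j t‖ ≤ K))
    -- (H5*)
    (hH5star : ∃ v : Fin n → ℝ, (∀ i, 0 < v i) ∧ ∃ α > (1 : ℝ), ∃ T ≥ (0 : ℝ),
      ∀ t ≥ T, ∀ i, α * (d i t * v i - ∑ j, ‖L i j t‖ * v j) ≤ β i t * v i)
    -- (ii): liminf_{t→∞} β_i(t) > 0 and liminf_{x→∞} h_i⁻(x) > 0 for every i
    (hβ_liminf : ∀ i, ∃ c > (0 : ℝ), ∀ᶠ t in Filter.atTop, c ≤ β i t)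
    (hh_liminf : ∀ i, ∃ c > (0 : ℝ), ∃ R, ∀ x ≥ R, c ≤ h i x) :
    -- conclusion: uniform persistence
    ∃ m > (0 : ℝ), ∀ x : C(ℝ, Fin n → ℝ),
      IsAdmissibleN n τ d L f x →
      ∃ T', ∀ t ≥ T', ∀ i, m ≤ x t i :=
  uniform_persistence_N_general n τ hτ d L f hd_cont hL_nonneg hf_nonneg β h hh0 hh_deriv hH4 hi
    hH5star hβ_liminf
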